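/- arXiv:1405.0568 — 6 statements merged into one kernel-verified Lean document; each statement's English description precedes it below -/
import Mathlib

section
/- For every natural number n ≥ 1 and every subgroup G of ℤ^n, the set G, viewed as a subset of n-tuples of integers, is definable without parameters in the structure (ℤ, +, 0); that is, there is a first-order formula φ(x₁,…,xₙ) in the language L such that G = {(a₁,…,aₙ) ∈ ℤⁿ : (ℤ,+,0) ⊨ φ(a₁,…,aₙ)}. -/
open FirstOrder

/-- The first-order language with one binary function symbol and one constant symbol. -/
def grpLang : FirstOrder.Language where
  Functions n :=
    match n with
    | 0 => Unit
    | 2 => Unit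
    | _ => Empty
  Relations _ := Empty

/-- Any additive commutative group, in particular `ℤ` and its powers, viewed as a
`grpLang`-structure interpreting the binary function symbol as addition and the
constant symbol as `0`. -/
instance grpLangStructure (M : Type*) [AddCommGroup M] : grpLang.Structure M where
  funMap {n} f x :=
    match n, f with
    | 0, _ => 0
    | 2, _ => x 0 + x 1
    | 1, f => f.elim
    | _ + 3, f => f.elim
  RelMap {n} r := r.elim

/-!
A subgroup of `ℤ^n` is finitely generated, say by `v₁, …, v_k`, so it is the set of `x` with
`∃ y, ∀ j, x_j = ∑ i, (v_i)_j • y_i`. Splitting each integer coefficient into its positive and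
negative parts turns every conjunct into an equation between `ℕ`-linear combinations of variables,
which is a formula in `+` and `0` alone.
-/

theorem zsmul_eq_toNat_nsmul_sub {M : Type*} [AddCommGroup M] (c : ℤ) (m : M) :
    c • m = c.toNat • m - (-c).toNat • m := by
  rw [← natCast_zsmul, ← natCast_zsmul, ← sub_smul, Int.toNat_sub_toNat_neg]

namespace grpLang

open Language Set

variable {α : Type*}

instance : Zero (grpLang.Term α) where
  zero := Constants.term (L := grpLang) ()

instance : Add (grpLang.Term α) where
  add := Functions.apply₂ (L := grpLang) ()

instance : SMul ℕ (grpLang.Term α) where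
  smul := nsmulRec

/-- Summation of terms; the order of the summands is chosen arbitrarily, which is harmless in a
commutative structure. -/
noncomputable def sum {β : Type*} (s : Finset β) (f : β → grpLang.Term α) : grpLang.Term α :=
  (s.toList.map f).sum

variable {M : Type*} [AddCommGroup M] {v : α → M} {t t₁ t₂ : grpLang.Term α}

@[simp] theorem realize_zero : Term.realize v (0 : grpLang.Term α) = 0 := rfl

@[simp] theorem realize_add :
    Term.realize v (t₁ + t₂) = Term.realize v t₁ + Term.realize v t₂ := rfl

@[simp] theorem realize_nsmul {n : ℕ} : Term.realize v (n • t) = n • Term.realize v t := by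
  induction n with
  | zero => exact (zero_nsmul _).symm
  | succ n ih => exact (congrArg (· + _) ih).trans (succ_nsmul _ _).symm

@[simp] theorem realize_sum {β : Type*} {s : Finset β} {f : β → grpLang.Term α} :
    Term.realize v (sum s f) = ∑ i ∈ s, Term.realize v (f i) := by
  rw [sum, ← Finset.sum_map_toList]
  induction s.toList with
  | nil => rfl
  | cons b l ih => simp [ih]

theorem definable_exists_eq_sum_zsmul {ι κ : Type*} [Finite ι] [Fintype κ] (c : ι → κ → ℤ) :
    (∅ : Set M).Definable grpLang {x : ι → M | ∃ y : κ → M, ∀ j, x j = ∑ i, c j i • y i} := by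
  rw [empty_definable_iff]
  refine ⟨Formula.iExs κ (Formula.iInf fun j : ι =>
    (Term.var (Sum.inl j) + sum Finset.univ fun i => (-c j i).toNat • Term.var (Sum.inr i)).equal
      (sum Finset.univ fun i => (c j i).toNat • Term.var (Sum.inr i))), ?_⟩
  ext x
  simp only [mem_ofPred_eq, Formula.realize_iExs, Formula.realize_iInf, Formula.realize_equal,
    realize_add, realize_sum, realize_nsmul, Term.realize_var, Sum.elim_inl, Sum.elim_inr,
    zsmul_eq_toNat_nsmul_sub, Finset.sum_sub_distrib, eq_sub_iff_add_eq]

end grpLang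

theorem subgroup_definable_in_int_general (n : ℕ) (G : AddSubgroup (Fin n → ℤ)) :
    Set.Definable (∅ : Set ℤ) grpLang (G : Set (Fin n → ℤ)) := by
  obtain ⟨k, v, hv⟩ := Submodule.fg_iff_exists_fin_generating_family.1
    (IsNoetherian.noetherian G.toIntSubmodule)
  have hG : (G : Set (Fin n → ℤ)) = {x | ∃ y : Fin k → ℤ, ∀ j, x j = ∑ i, v i j • y i} := by
    ext x
    change x ∈ G.toIntSubmodule ↔ _
    simp only [← hv, Submodule.mem_span_range_iff_exists_fun, funext_iff, Finset.sum_apply,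
      Pi.smul_apply, smul_eq_mul, mul_comm, eq_comm, Set.mem_ofPred_eq]
  exact hG ▸ grpLang.definable_exists_eq_sum_zsmul _

/-- Every subgroup of `ℤ^n`, viewed as a set of `n`-tuples of integers, is definable
without parameters in the structure `(ℤ, +, 0)`. -/
theorem subgroup_definable_in_int (n : ℕ) (hn : 1 ≤ n) (G : AddSubgroup (Fin n → ℤ)) :
    Set.Definable (∅ : Set ℤ) grpLang (G : Set (Fin n → ℤ)) :=
  subgroup_definable_in_int_general n G
end

section
/- For every natural number n ≥ 2 and every subgroup G of ℤ^n that is nontrivial (G ≠ {0}) and of infinite index in ℤ^n, the set G is not definable, even allowing parameters from ℤ^n, in the structure (ℤ^n, +, 0). -/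
open FirstOrder

/-!
Quantifier elimination for a torsion-free abelian group `M` in which every `m • M` has finite
index: every set definable with parameters is a Boolean combination of congruences
`∑ aᵢ • xᵢ ∈ c + d • M`. To eliminate `∃ z` from a conjunction of such conditions, either one of
them is an equation `e • z = c - ∑ aᵢ • xᵢ` with `e ≠ 0`, and multiplying the others by `e`
substitutes it away, or one writes `z = r + N • z'` with `N` a common multiple of the moduli and
`r` a representative of `M / N • M`; then the congruences no longer depend on `z'`, and the
inequations in `z'` exclude only finitely many values.

Hence a definable subset of `M` agrees, up to finitely many points, with a union of cosets of
some `m • M`. A nontrivial subgroup with this property is infinite, so it meets such a coset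
`x + m • M` in all but finitely many points, and therefore contains `m • M`: it has finite index.
-/

open Filter

variable {M : Type*} [AddCommGroup M] {k : ℕ}

theorem exists_ne_zero_forall_dvd (D : List ℤ) : ∃ N : ℕ, N ≠ 0 ∧ ∀ d ∈ D, d ≠ 0 → d ∣ (N : ℤ) :=
  ⟨(D.filter (· ≠ 0)).prod.natAbs, by simp [List.prod_eq_zero_iff],
    fun d hd hd0 => Int.dvd_natAbs.2 (List.dvd_prod (by simpa using ⟨hd, hd0⟩))⟩

theorem exists_eq_out_add_zsmul (N : ℕ) (z : M) :
    ∃ z', z = (z : M ⧸ (nsmulAddMonoidHom (α := M) N).range).out + (N : ℤ) • z' := by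
  obtain ⟨⟨_, y, rfl⟩, hy⟩ :=
    QuotientAddGroup.mk_out_eq_add (nsmulAddMonoidHom (α := M) N).range z
  exact ⟨-y, by rw [hy]; simp⟩

theorem eventually_cofinite_zsmul_ne [IsAddTorsionFree M] {n : ℤ} (hn : n ≠ 0) (y : M) :
    ∀ᶠ z in cofinite, n • z ≠ y :=
  eventually_cofinite.2 <| Set.Subsingleton.finite fun _ ha _ hb =>
    zsmul_right_injective hn (not_not.1 ha |>.trans (not_not.1 hb).symm)

structure CongrLit (M : Type*) (k : ℕ) where
  pos : Bool
  a : Fin k → ℤ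
  c : M
  d : ℤ

namespace CongrLit

def atom (l : CongrLit M k) : Set (Fin k → M) :=
  {x | ∃ w, ∑ i, l.a i • x i = l.c + l.d • w}

def set (l : CongrLit M k) : Set (Fin k → M) :=
  if l.pos then l.atom else l.atomᶜ

def neg (l : CongrLit M k) : CongrLit M k :=
  { l with pos := !l.pos }

theorem set_neg (l : CongrLit M k) : l.neg.set = l.setᶜ := by
  cases h : l.pos <;> simp [set, neg, atom, h]

theorem mem_set_iff_of_mem_atom_iff {k' : ℕ} {l : CongrLit M k} {l' : CongrLit M k'}
    {x : Fin k → M} {y : Fin k' → M} (h : x ∈ l.atom ↔ y ∈ l'.atom) (hpos : l.pos = l'.pos) :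
    x ∈ l.set ↔ y ∈ l'.set := by
  cases h' : l.pos <;> simp [set, ← hpos, h', h]

abbrev lastCoeff (l : CongrLit M (k + 1)) : ℤ := l.a (Fin.last k)

theorem mem_atom_snoc (l : CongrLit M (k + 1)) (x : Fin k → M) (z : M) :
    Fin.snoc x z ∈ l.atom ↔ ∃ w, ∑ i, Fin.init l.a i • x i + l.lastCoeff • z = l.c + l.d • w := by
  simp [atom, Fin.sum_univ_castSucc, Fin.init]

def subst (l : CongrLit M (k + 1)) (e₀ : ℤ) (a₀ : Fin k → ℤ) (c₀ : M) : CongrLit M k :=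
  ⟨l.pos, fun i => e₀ * Fin.init l.a i - l.lastCoeff * a₀ i, e₀ • l.c - l.lastCoeff • c₀, e₀ * l.d⟩

theorem mem_atom_subst [IsAddTorsionFree M] (l : CongrLit M (k + 1)) {e₀ : ℤ} (he₀ : e₀ ≠ 0)
    {a₀ : Fin k → ℤ} {c₀ z : M} {x : Fin k → M} (hz : e₀ • z = c₀ - ∑ i, a₀ i • x i) :
    Fin.snoc x z ∈ l.atom ↔ x ∈ (l.subst e₀ a₀ c₀).atom := by
  have hsum : ∑ i, (e₀ * Fin.init l.a i - l.lastCoeff * a₀ i) • x i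
      = e₀ • ∑ i, Fin.init l.a i • x i - l.lastCoeff • ∑ i, a₀ i • x i := by
    simp [sub_smul, mul_smul, Finset.sum_sub_distrib, Finset.smul_sum]
  rw [mem_atom_snoc]
  simp only [subst, atom, Set.mem_ofPred_eq, hsum]
  refine exists_congr fun w => ⟨fun hw => ?_, fun hw => zsmul_right_injective he₀ ?_⟩
  · linear_combination (norm := module) e₀ • hw - l.lastCoeff • hz
  · linear_combination (norm := module) hw + l.lastCoeff • hz

def shift (l : CongrLit M (k + 1)) (r : M) : CongrLit M k :=
  ⟨l.pos, Fin.init l.a, l.c - l.lastCoeff • r, l.d⟩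

theorem mem_atom_shift (l : CongrLit M (k + 1)) {N : ℤ} (hN : l.d ∣ l.lastCoeff * N)
    (x : Fin k → M) (r z : M) :
    Fin.snoc x (r + N • z) ∈ l.atom ↔ x ∈ (l.shift r).atom := by
  obtain ⟨q, hq⟩ := hN
  have hz : (l.lastCoeff * N) • z = l.d • q • z := by rw [hq, mul_smul]
  rw [mem_atom_snoc]
  simp only [shift, atom, Set.mem_ofPred_eq]
  constructor
  · rintro ⟨w, hw⟩
    exact ⟨w - q • z, by linear_combination (norm := module) hw - hz⟩
  · rintro ⟨w, hw⟩
    exact ⟨w + q • z, by linear_combination (norm := module) hw + hz⟩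

end CongrLit

inductive IsCongrDefinable : Set (Fin k → M) → Prop
  | lit (l : CongrLit M k) : IsCongrDefinable l.set
  | union {s t : Set (Fin k → M)} : IsCongrDefinable s → IsCongrDefinable t →
      IsCongrDefinable (s ∪ t)
  | inter {s t : Set (Fin k → M)} : IsCongrDefinable s → IsCongrDefinable t →
      IsCongrDefinable (s ∩ t)

namespace IsCongrDefinable

theorem univ : IsCongrDefinable (Set.univ : Set (Fin k → M)) := by
  convert lit (⟨true, 0, 0, 0⟩ : CongrLit M k)
  simp [CongrLit.set, CongrLit.atom]

theorem empty : IsCongrDefinable (∅ : Set (Fin k → M)) := by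
  convert lit (⟨false, 0, 0, 0⟩ : CongrLit M k)
  simp [CongrLit.set, CongrLit.atom]

theorem compl {s : Set (Fin k → M)} (hs : IsCongrDefinable s) : IsCongrDefinable sᶜ := by
  induction hs with
  | lit l => exact l.set_neg ▸ lit l.neg
  | union _ _ hs ht => simpa only [Set.compl_union] using hs.inter ht
  | inter _ _ hs ht => simpa only [Set.compl_inter] using hs.union ht

theorem iUnion {ι : Type*} [Finite ι] {s : ι → Set (Fin k → M)}
    (hs : ∀ i, IsCongrDefinable (s i)) : IsCongrDefinable (⋃ i, s i) := by
  have := Fintype.ofFinite ι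
  suffices ∀ t : Finset ι, IsCongrDefinable (⋃ i ∈ t, s i) by simpa using this Finset.univ
  intro t
  induction t using Finset.cons_induction with
  | empty => simpa using empty
  | cons i t _ ht => simpa [Finset.set_biUnion_insert] using (hs i).union ht

end IsCongrDefinable

def cell (L : List (CongrLit M k)) : Set (Fin k → M) :=
  {x | ∀ l ∈ L, x ∈ l.set}

theorem cell_append (L L' : List (CongrLit M k)) : cell (L ++ L') = cell L ∩ cell L' := by
  ext x
  simp [cell, or_imp, forall_and]

theorem isCongrDefinable_cell (L : List (CongrLit M k)) : IsCongrDefinable (cell L) := by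
  induction L with
  | nil => simpa [cell] using IsCongrDefinable.univ
  | cons l L ih => simpa [cell, Set.ofPred_and] using (IsCongrDefinable.lit l).inter ih

theorem IsCongrDefinable.exists_eq_iUnion_cell {s : Set (Fin k → M)} (hs : IsCongrDefinable s) :
    ∃ (ι : Type) (_ : Finite ι) (L : ι → List (CongrLit M k)), s = ⋃ i, cell (L i) := by
  induction hs with
  | lit l => exact ⟨Unit, inferInstance, fun _ => [l], by ext; simp [cell]⟩
  | union _ _ hs ht =>
    obtain ⟨ι, _, L, rfl⟩ := hs
    obtain ⟨ι', _, L', rfl⟩ := ht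
    exact ⟨ι ⊕ ι', inferInstance, Sum.elim L L', by ext; simp⟩
  | inter _ _ hs ht =>
    obtain ⟨ι, _, L, rfl⟩ := hs
    obtain ⟨ι', _, L', rfl⟩ := ht
    exact ⟨ι × ι', inferInstance, fun p => L p.1 ++ L' p.2, by
      ext; simp [cell_append, Set.iUnion_inter_iUnion]⟩

open CongrLit

theorem setOf_exists_snoc_mem_cell_of_eq [IsAddTorsionFree M] {L : List (CongrLit M (k + 1))}
    {l₀ : CongrLit M (k + 1)} (hl₀ : l₀ ∈ L) (hpos : l₀.pos = true) (he : l₀.lastCoeff ≠ 0)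
    (hd : l₀.d = 0) :
    {x | ∃ z, Fin.snoc x z ∈ cell L} =
      cell (⟨true, Fin.init l₀.a, l₀.c, -l₀.lastCoeff⟩ ::
        L.map (·.subst l₀.lastCoeff (Fin.init l₀.a) l₀.c)) := by
  ext x
  have hsolve :
      ∀ z, Fin.snoc x z ∈ l₀.set ↔ l₀.lastCoeff • z = l₀.c - ∑ i, Fin.init l₀.a i • x i := by
    intro z
    simp only [CongrLit.set, hpos, if_true, mem_atom_snoc, hd, zero_smul, add_zero, exists_const]
    constructor <;> intro h <;> linear_combination (norm := module) h
  simp only [cell, List.forall_mem_cons, List.forall_mem_map, Set.mem_ofPred_eq]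
  constructor
  · rintro ⟨z, hz⟩
    have h₀ := (hsolve z).1 (hz l₀ hl₀)
    refine ⟨?_, fun l hl => (mem_set_iff_of_mem_atom_iff (l.mem_atom_subst he h₀) rfl).1 (hz l hl)⟩
    simp only [CongrLit.set, if_true, atom, Set.mem_ofPred_eq]
    exact ⟨z, by linear_combination (norm := module) h₀⟩
  · rintro ⟨h₀, h⟩
    simp only [CongrLit.set, if_true, atom, Set.mem_ofPred_eq] at h₀
    obtain ⟨z, hz⟩ := h₀
    have h₀ : l₀.lastCoeff • z = l₀.c - ∑ i, Fin.init l₀.a i • x i := by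
      linear_combination (norm := module) hz
    exact ⟨z, fun l hl => (mem_set_iff_of_mem_atom_iff (l.mem_atom_subst he h₀) rfl).2 (h l hl)⟩

theorem setOf_exists_snoc_mem_cell_eq_iUnion [IsAddTorsionFree M] [Infinite M]
    {L : List (CongrLit M (k + 1))} {N : ℕ} (hN : N ≠ 0) (hdvd : ∀ l ∈ L, l.d ≠ 0 → l.d ∣ N)
    (hneg : ∀ l ∈ L, l.lastCoeff ≠ 0 → l.d = 0 → l.pos = false) :
    {x | ∃ z, Fin.snoc x z ∈ cell L} =
      ⋃ q : M ⧸ (nsmulAddMonoidHom (α := M) N).range,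
        cell ((L.filter fun l => l.lastCoeff = 0 ∨ l.d ≠ 0).map (·.shift q.out)) := by
  ext x
  simp only [cell, Set.mem_iUnion, List.forall_mem_map, List.mem_filter, decide_eq_true_eq,
    and_imp, Set.mem_ofPred_eq]
  have hshift : ∀ l ∈ L, (l.lastCoeff = 0 ∨ l.d ≠ 0) → ∀ r z',
      Fin.snoc x (r + (N : ℤ) • z') ∈ l.set ↔ x ∈ (l.shift r).set := by
    refine fun l hl hl' r z' => mem_set_iff_of_mem_atom_iff (l.mem_atom_shift ?_ x r z') rfl
    rcases hl' with he | hd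
    · simp [he]
    · exact (hdvd l hl hd).mul_left _
  constructor
  · rintro ⟨z, hz⟩
    obtain ⟨z', hz'⟩ := exists_eq_out_add_zsmul N z
    exact ⟨_, fun l hl hl' => (hshift l hl hl' _ z').1 (by rw [← hz']; exact hz l hl)⟩
  · rintro ⟨q, hq⟩
    -- the inequations dropped from the cells exclude only finitely many `z'`
    have hev : ∀ᶠ z' in cofinite, ∀ l ∈ {l | l ∈ L}, l.lastCoeff ≠ 0 →
        (l.lastCoeff * N) • z' ≠ l.c - ∑ i, Fin.init l.a i • x i - l.lastCoeff • q.out := by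
      refine (eventually_all_finite L.finite_toSet).2 fun l _ => ?_
      by_cases he : l.lastCoeff = 0
      · exact .of_forall fun _ h => absurd he h
      · exact (eventually_cofinite_zsmul_ne (mul_ne_zero he (by exact_mod_cast hN)) _).mono
          fun _ h _ => h
    obtain ⟨z', hz'⟩ := hev.exists
    refine ⟨q.out + (N : ℤ) • z', fun l hl => ?_⟩
    by_cases hl' : l.lastCoeff = 0 ∨ l.d ≠ 0
    · exact (hshift l hl hl' _ z').2 (hq l hl hl')
    · push Not at hl'
      simp only [CongrLit.set, hneg l hl hl'.1 hl'.2, Bool.false_eq_true, if_false,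
        Set.mem_compl_iff, mem_atom_snoc, hl'.2, zero_smul, add_zero, exists_const]
      intro h
      exact hz' l hl hl'.1 (by linear_combination (norm := module) h)

theorem isCongrDefinable_setOf_exists_snoc_mem_cell [IsAddTorsionFree M] [Infinite M]
    (hM : ∀ N : ℕ, N ≠ 0 → (nsmulAddMonoidHom (α := M) N).range.FiniteIndex)
    (L : List (CongrLit M (k + 1))) : IsCongrDefinable {x | ∃ z, Fin.snoc x z ∈ cell L} := by
  by_cases h : ∃ l ∈ L, l.pos = true ∧ l.lastCoeff ≠ 0 ∧ l.d = 0
  · obtain ⟨l₀, hl₀, hpos, he, hd⟩ := h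
    rw [setOf_exists_snoc_mem_cell_of_eq hl₀ hpos he hd]
    exact isCongrDefinable_cell _
  · push Not at h
    obtain ⟨N, hN, hdvd⟩ := exists_ne_zero_forall_dvd (L.map (·.d))
    have := hM N hN
    rw [setOf_exists_snoc_mem_cell_eq_iUnion hN (fun l hl => hdvd l.d (List.mem_map_of_mem hl))
      fun l hl he hd => Bool.eq_false_iff.2 fun hpos => h l hl hpos he hd]
    exact IsCongrDefinable.iUnion fun _ => isCongrDefinable_cell _

theorem IsCongrDefinable.setOf_exists_snoc [IsAddTorsionFree M] [Infinite M]
    (hM : ∀ N : ℕ, N ≠ 0 → (nsmulAddMonoidHom (α := M) N).range.FiniteIndex)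
    {s : Set (Fin (k + 1) → M)} (hs : IsCongrDefinable s) :
    IsCongrDefinable {x | ∃ z, Fin.snoc x z ∈ s} := by
  obtain ⟨ι, _, L, rfl⟩ := hs.exists_eq_iUnion_cell
  have : {x | ∃ z, Fin.snoc x z ∈ ⋃ i, cell (L i)} = ⋃ i, {x | ∃ z, Fin.snoc x z ∈ cell (L i)} := by
    ext; simp only [Set.mem_iUnion, Set.mem_ofPred_eq]; exact exists_comm
  rw [this]
  exact iUnion fun i => isCongrDefinable_setOf_exists_snoc_mem_cell hM (L i)

open Language in
theorem exists_realize_eq_add_sum {β : Type*} (v : β → M) (t : grpLang.Term (β ⊕ Fin k)) :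
    ∃ (c : M) (a : Fin k → ℤ), ∀ x, t.realize (Sum.elim v x) = c + ∑ i, a i • x i := by
  induction t with
  | var u =>
    cases u with
    | inl b => exact ⟨v b, 0, fun x => by simp⟩
    | inr j => exact ⟨0, Pi.single j 1, fun x => by simp [Pi.single_apply]⟩
  | @func l f ts ih =>
    match l, f with
    | 0, _ => exact ⟨0, 0, fun x => by simp; rfl⟩
    | 1, f => exact f.elim
    | 2, _ =>
      obtain ⟨c₀, a₀, h₀⟩ := ih 0
      obtain ⟨c₁, a₁, h₁⟩ := ih 1
      refine ⟨c₀ + c₁, a₀ + a₁, fun x => ?_⟩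
      change (ts 0).realize _ + (ts 1).realize _ = _
      simp only [h₀, h₁, Pi.add_apply, add_smul, Finset.sum_add_distrib]
      abel
    | _ + 3, f => exact f.elim

open Language in
theorem isCongrDefinable_setOf_realize [IsAddTorsionFree M] [Infinite M]
    (hM : ∀ N : ℕ, N ≠ 0 → (nsmulAddMonoidHom (α := M) N).range.FiniteIndex)
    {β : Type*} (v : β → M) (φ : grpLang.BoundedFormula β k) :
    IsCongrDefinable {x | φ.Realize v x} := by
  induction φ with
  | falsum => simpa [BoundedFormula.Realize] using IsCongrDefinable.empty
  | equal t₁ t₂ =>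
    obtain ⟨c₁, a₁, h₁⟩ := exists_realize_eq_add_sum v t₁
    obtain ⟨c₂, a₂, h₂⟩ := exists_realize_eq_add_sum v t₂
    convert IsCongrDefinable.lit (⟨true, a₁ - a₂, c₂ - c₁, 0⟩ : CongrLit M _) using 1
    ext x
    simp only [CongrLit.set, CongrLit.atom, if_true, Set.mem_ofPred_eq, BoundedFormula.Realize,
      h₁, h₂, zero_smul, add_zero, exists_const, Pi.sub_apply, sub_smul, Finset.sum_sub_distrib]
    constructor <;> intro h <;> linear_combination (norm := module) h
  | rel r _ => exact r.elim
  | imp φ ψ hφ hψ =>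
    convert hφ.compl.union hψ using 1
    ext x
    simp only [BoundedFormula.realize_imp, Set.mem_union, Set.mem_compl_iff, Set.mem_ofPred_eq]
    exact imp_iff_not_or
  | all φ hφ =>
    convert (hφ.compl.setOf_exists_snoc hM).compl using 1
    ext x
    simp [BoundedFormula.realize_all]

def IsAlmostPeriodic (s : Set M) : Prop :=
  ∃ m : ℕ, m ≠ 0 ∧ ∃ t : Set M, (∀ x w, x + m • w ∈ t ↔ x ∈ t) ∧ s =ᶠ[cofinite] t

namespace IsAlmostPeriodic

theorem compl {s : Set M} (hs : IsAlmostPeriodic s) : IsAlmostPeriodic sᶜ := by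
  obtain ⟨m, hm, t, ht, hst⟩ := hs
  exact ⟨m, hm, tᶜ, fun x w => not_congr (ht x w), hst.compl⟩

theorem inter {s s' : Set M} (hs : IsAlmostPeriodic s) (hs' : IsAlmostPeriodic s') :
    IsAlmostPeriodic (s ∩ s') := by
  obtain ⟨m, hm, t, ht, hst⟩ := hs
  obtain ⟨m', hm', t', ht', hst'⟩ := hs'
  refine ⟨m * m', mul_ne_zero hm hm', t ∩ t', fun x w => ?_, hst.inter hst'⟩
  exact and_congr (by rw [mul_smul, ht]) (by rw [mul_comm, mul_smul, ht'])

theorem union {s s' : Set M} (hs : IsAlmostPeriodic s) (hs' : IsAlmostPeriodic s') :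
    IsAlmostPeriodic (s ∪ s') := by
  simpa only [← Set.compl_union, compl_compl] using (hs.compl.inter hs'.compl).compl

end IsAlmostPeriodic

theorem isAlmostPeriodic_setOf_zsmul_mem [IsAddTorsionFree M] (a d : ℤ) (c : M) :
    IsAlmostPeriodic {x : M | ∃ w, a • x = c + d • w} := by
  by_cases hd : d = 0
  · subst hd
    by_cases ha : a = 0
    · exact ⟨1, one_ne_zero, _, fun x w => by simp [ha], .rfl⟩
    · refine ⟨1, one_ne_zero, ∅, by simp, eventuallyEq_empty.2 ?_⟩
      refine Set.Finite.eventually_cofinite_notMem (Set.Subsingleton.finite ?_)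
      rintro x ⟨w, hx⟩ y ⟨w', hy⟩
      exact zsmul_right_injective ha (by simp_all)
  · obtain ⟨q, hq⟩ : d ∣ (d.natAbs : ℤ) := Int.dvd_natAbs.2 dvd_rfl
    refine ⟨d.natAbs, by simpa using hd, _, fun x w => ?_, .rfl⟩
    have hw : a • (x + d.natAbs • w) = a • x + d • (a * q) • w := by
      rw [← natCast_zsmul, hq, smul_add, ← mul_smul, ← mul_smul, mul_left_comm]
    simp only [Set.mem_ofPred_eq, hw]
    constructor
    · rintro ⟨v, hv⟩
      exact ⟨v - (a * q) • w, by linear_combination (norm := module) hv⟩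
    · rintro ⟨v, hv⟩
      exact ⟨v + (a * q) • w, by linear_combination (norm := module) hv⟩

theorem IsCongrDefinable.isAlmostPeriodic_preimage [IsAddTorsionFree M]
    {s : Set (Fin 1 → M)} (hs : IsCongrDefinable s) :
    IsAlmostPeriodic ((fun x _ => x) ⁻¹' s : Set M) := by
  induction hs with
  | lit l =>
    have := isAlmostPeriodic_setOf_zsmul_mem (l.a 0) l.d l.c
    cases h : l.pos
    · simpa [CongrLit.set, CongrLit.atom, h, Set.preimage, Set.compl_def] using this.compl
    · simpa [CongrLit.set, CongrLit.atom, h, Set.preimage] using this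
  | union _ _ hs ht => exact hs.union ht
  | inter _ _ hs ht => exact hs.inter ht

open Language in
theorem Set.Definable₁.isAlmostPeriodic [IsAddTorsionFree M] [Infinite M]
    (hM : ∀ N : ℕ, N ≠ 0 → (nsmulAddMonoidHom (α := M) N).range.FiniteIndex)
    {A s : Set M} (hs : A.Definable₁ grpLang s) : IsAlmostPeriodic s := by
  obtain ⟨φ, hφ⟩ := Set.definable_iff_exists_formula_sum.1 hs
  -- `relabel id` turns the free variable indexed by `Fin 1` into a bound one
  have h := isCongrDefinable_setOf_realize hM Subtype.val
    (BoundedFormula.relabel id φ : grpLang.BoundedFormula A (1 + 0))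
  have hset : {x : Fin 1 → M | (BoundedFormula.relabel id φ).Realize Subtype.val x} =
      {x | x 0 ∈ s} := by
    rw [hφ]
    ext x
    simp only [Set.mem_ofPred_eq, Formula.Realize, BoundedFormula.realize_relabel]
    exact iff_of_eq (congrArg₂ _ rfl (Subsingleton.elim _ _))
  rw [hset] at h
  simpa using h.isAlmostPeriodic_preimage

theorem AddSubgroup.infinite_of_ne_bot [IsAddTorsionFree M] {G : AddSubgroup M} (hG : G ≠ ⊥) :
    (G : Set M).Infinite := by
  obtain ⟨g, hgG, hg⟩ := G.bot_or_exists_ne_zero.resolve_left hG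
  exact Set.infinite_of_injective_forall_mem (f := fun n : ℤ => n • g)
    (fun n n' h => by simpa [sub_smul, sub_eq_zero, hg] using sub_eq_zero.2 h)
    fun n => G.zsmul_mem hgG n

theorem AddSubgroup.finiteIndex_of_isAlmostPeriodic [IsAddTorsionFree M]
    (hM : ∀ N : ℕ, N ≠ 0 → (nsmulAddMonoidHom (α := M) N).range.FiniteIndex)
    {G : AddSubgroup M} (hG : G ≠ ⊥) (hper : IsAlmostPeriodic (G : Set M)) : G.FiniteIndex := by
  obtain ⟨m, hm, t, ht, hGt⟩ := hper
  have hGinf := AddSubgroup.infinite_of_ne_bot hG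
  have : Infinite M := Set.infinite_univ_iff.1 (hGinf.mono (Set.subset_univ _))
  obtain ⟨x, hxG, hxt⟩ := (hGinf.frequently_cofinite.and_eventually hGt.mem_iff).exists
  have hmem : ∀ u, ∀ᶠ w in cofinite, x + m • (w + u) ∈ G := fun u =>
    have hinj : Function.Injective fun w => x + m • (w + u) :=
      (add_right_injective x).comp ((nsmul_right_injective hm).comp (add_left_injective u))
    (hinj.tendsto_cofinite.eventually hGt.mem_iff).mono fun w hw => hw.2 ((ht _ _).2 (hxt.1 hxG))
  have hle : (nsmulAddMonoidHom (α := M) m).range ≤ G := by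
    rintro _ ⟨u, rfl⟩
    obtain ⟨w, hw₀, hwu⟩ := ((hmem 0).and (hmem u)).exists
    simpa [smul_add] using G.sub_mem hwu hw₀
  have := hM m hm
  exact AddSubgroup.finiteIndex_of_le hle

theorem not_definable₁_of_index_eq_zero [IsAddTorsionFree M]
    (hM : ∀ N : ℕ, N ≠ 0 → (nsmulAddMonoidHom (α := M) N).range.FiniteIndex)
    {A : Set M} {G : AddSubgroup M} (hG : G ≠ ⊥) (hind : G.index = 0) :
    ¬ A.Definable₁ grpLang (G : Set M) := by
  intro hdef
  have : Infinite M :=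
    Set.infinite_univ_iff.1 ((AddSubgroup.infinite_of_ne_bot hG).mono (Set.subset_univ _))
  exact (AddSubgroup.finiteIndex_of_isAlmostPeriodic hM hG (hdef.isAlmostPeriodic hM)).index_ne_zero
    hind

theorem not_definable_of_infinite_index_general (n : ℕ)
    (G : AddSubgroup (Fin n → ℤ)) (hG : G ≠ ⊥) (hind : G.index = 0) :
    ¬ Set.Definable₁ (Set.univ : Set (Fin n → ℤ)) grpLang (G : Set (Fin n → ℤ)) :=
  not_definable₁_of_index_eq_zero
    (fun _ hN => AddSubgroup.finiteIndex_range_nsmulAddMonoidHom_of_fg _ hN) hG hind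

/-- For `n ≥ 2`, every nontrivial subgroup of `ℤ^n` of infinite index (recall that
`AddSubgroup.index G = 0` encodes that `G` has infinite index) is not definable,
even with parameters (i.e. over the full parameter set `ℤ^n`), in the structure
`(ℤ^n, +, 0)`. -/
theorem not_definable_of_infinite_index (n : ℕ) (hn : 2 ≤ n)
    (G : AddSubgroup (Fin n → ℤ)) (hG : G ≠ ⊥) (hind : G.index = 0) :
    ¬ Set.Definable₁ (Set.univ : Set (Fin n → ℤ)) grpLang (G : Set (Fin n → ℤ)) :=
  not_definable_of_infinite_index_general n G hG hind
end

section
/- Let A ⊆ ℕ be an infinite set whose increasing enumeration a₀ < a₁ < a₂ < … has eventually strictly increasing gaps, i.e., there is k₀ such that a_{i+2} − a_{i+1} > a_{i+1} − a_i for all i > k₀. Then for every natural number n ≥ 1, every integer m, and every finite family of pairs of integers (k₁,l₁),…,(k_p,l_p), the coset m + nℤ is not contained in the union ⋃_{i=1}^{p} {k_i + l_i·a : a ∈ A}; that is, there exists an integer x with x ≡ m (mod n) and x ∉ ⋃_{i=1}^{p} {k_i + l_i·a : a ∈ A}. -/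
/-! Eventually increasing gaps make `a` grow quadratically, so `A` has only `O(√X)` elements
below `X`. The first `N` points `m + n j` of the coset have size `O(N)`, so a set `k + l·A` with
`l ≠ 0` contains at most `O(√N)` of them, and one with `l = 0` at most one; for `N` large, `p`
such sets cannot cover all `N` points. -/

open Finset

section IncreasingGaps

variable {a : ℕ → ℕ} {k₀ : ℕ}

theorem add_one_le_gap (ha : StrictMono a)
    (hgaps : ∀ i, k₀ < i → a (i + 1) - a i < a (i + 2) - a (i + 1)) (s : ℕ) :
    s + 1 ≤ a (k₀ + 1 + s + 1) - a (k₀ + 1 + s) := by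
  induction s with
  | zero => have := ha (show k₀ + 1 + 0 < k₀ + 1 + 0 + 1 by omega); omega
  | succ s ih =>
    have hgap := hgaps (k₀ + 1 + s) (by omega)
    show s + 1 + 1 ≤ a (k₀ + 1 + s + 2) - a (k₀ + 1 + s + 1)
    omega

theorem mul_add_one_le_two_mul (ha : StrictMono a)
    (hgaps : ∀ i, k₀ < i → a (i + 1) - a i < a (i + 2) - a (i + 1)) (s : ℕ) :
    s * (s + 1) ≤ 2 * a (k₀ + 1 + s) := by
  induction s with
  | zero => simp
  | succ s ih =>
    have hgap := add_one_le_gap ha hgaps s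
    have hmono := ha (Nat.lt_succ_self (k₀ + 1 + s))
    rw [← add_assoc]
    have : a (k₀ + 1 + s) + (s + 1) ≤ a (k₀ + 1 + s + 1) := by omega
    nlinarith

theorem exists_le_add_sqrt (ha : StrictMono a)
    (hgaps : ∀ i, k₀ < i → a (i + 1) - a i < a (i + 2) - a (i + 1)) :
    ∃ c, ∀ t, t ≤ c + Nat.sqrt (2 * a t) := by
  refine ⟨k₀ + 1, fun t => ?_⟩
  rcases le_or_gt t (k₀ + 1) with ht | ht
  · omega
  · obtain ⟨s, rfl⟩ := Nat.exists_eq_add_of_le ht.le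
    have := mul_add_one_le_two_mul ha hgaps s
    have : s ≤ Nat.sqrt (2 * a (k₀ + 1 + s)) := Nat.le_sqrt.mpr (by nlinarith)
    omega

end IncreasingGaps

theorem exists_add_mul_sqrt_lt (u v w z : ℕ) : ∃ N, u + v * Nat.sqrt (w * N + z) < N := by
  set R := u + v * (w + z) + 1 with hR
  refine ⟨R ^ 2, ?_⟩
  have hR₁ : 1 ≤ R := by omega
  have hsqrt : Nat.sqrt (w * R ^ 2 + z) ≤ (w + z) * R := by
    have hz : z ≤ z * R ^ 2 := Nat.le_mul_of_pos_right _ (by positivity)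
    have hwz : w + z ≤ (w + z) ^ 2 := Nat.le_self_pow two_ne_zero _
    calc Nat.sqrt (w * R ^ 2 + z) ≤ Nat.sqrt (((w + z) * R) ^ 2) :=
          Nat.sqrt_le_sqrt (by nlinarith)
      _ = (w + z) * R := Nat.sqrt_eq' _
  have hu : u ≤ u * R := Nat.le_mul_of_pos_right _ hR₁
  calc u + v * Nat.sqrt (w * R ^ 2 + z) ≤ u + v * ((w + z) * R) := by gcongr
    _ < R * R := by nth_rw 1 [hR]; nlinarith
    _ = R ^ 2 := (sq R).symm

theorem exists_le_sqrt_eq_add_mul {a : ℕ → ℕ} {c : ℕ} (hidx : ∀ t, t ≤ c + Nat.sqrt (2 * a t))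
    {x k l : ℤ} {t Y : ℕ} (hx : x = k + l * a t) (hY : (x - k).natAbs ≤ Y) :
    ∃ t' ≤ c + Nat.sqrt (2 * Y), x = k + l * a t' := by
  by_cases hl : l = 0
  · exact ⟨0, Nat.zero_le _, by simp [hx, hl]⟩
  refine ⟨t, (hidx t).trans ?_, hx⟩
  have hat : a t ≤ (x - k).natAbs := by
    rw [hx, add_sub_cancel_left, Int.natAbs_mul, Int.natAbs_natCast]
    exact Nat.le_mul_of_pos_left _ (Int.natAbs_pos.mpr hl)
  gcongr
  exact hat.trans hY

theorem card_le_mul_of_forall_exists_eq {p T : ℕ} {S : Finset ℤ} (f : Fin p → ℕ → ℤ)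
    (hS : ∀ x ∈ S, ∃ i, ∃ t ≤ T, x = f i t) : #S ≤ p * (T + 1) :=
  calc #S ≤ #(univ.biUnion fun i => (range (T + 1)).image (f i)) := by
        refine card_le_card fun x hx => ?_
        obtain ⟨i, t, ht, rfl⟩ := hS x hx
        exact mem_biUnion.mpr ⟨i, mem_univ i, mem_image_of_mem _ (mem_range.mpr (by omega))⟩
    _ ≤ ∑ i, #((range (T + 1)).image (f i)) := card_biUnion_le
    _ ≤ ∑ _i : Fin p, (T + 1) := sum_le_sum fun i _ => card_image_le.trans (card_range _).le
    _ = p * (T + 1) := by simp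

/-- Let `A ⊆ ℕ` be an infinite set whose increasing enumeration `a₀ < a₁ < …` has
eventually strictly increasing gaps: there is `k₀` with
`a (i+2) - a (i+1) > a (i+1) - a i` for all `i > k₀`. Then for every `n ≥ 1`, every
integer `m`, and every finite family of pairs of integers `(kᵢ, lᵢ)`, the coset
`m + nℤ` is not contained in `⋃ᵢ {kᵢ + lᵢ·a : a ∈ A}`: there is an integer `x` with
`x ≡ m (mod n)` avoiding all the sets `{kᵢ + lᵢ·a : a ∈ A}`. -/
theorem coset_not_covered_of_sparse (A : Set ℕ) (a : ℕ → ℕ)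
    (ha_mono : StrictMono a) (ha_range : Set.range a = A)
    (hgaps : ∃ k₀ : ℕ, ∀ i : ℕ, k₀ < i → a (i + 1) - a i < a (i + 2) - a (i + 1)) :
    ∀ (n : ℕ), 1 ≤ n → ∀ (m : ℤ) (p : ℕ) (k l : Fin p → ℤ),
      ∃ x : ℤ, x ≡ m [ZMOD (n : ℤ)] ∧
        ∀ i : Fin p, ∀ α ∈ A, x ≠ k i + l i * (α : ℤ) := by
  obtain ⟨k₀, hk₀⟩ := hgaps
  obtain ⟨c, hidx⟩ := exists_le_add_sqrt ha_mono hk₀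
  intro n hn m p k l
  by_contra! hcover
  rw [← ha_range] at hcover
  set K := univ.sup fun i => (k i).natAbs
  obtain ⟨N, hN⟩ := exists_add_mul_sqrt_lt (p * (c + 1)) p (2 * n) (2 * (m.natAbs + K))
  have hinj : Function.Injective fun j : ℕ => m + n * j := fun j j' h => by
    have hn₀ : n ≠ 0 := by omega
    simpa [hn₀] using h
  have hcard := card_le_mul_of_forall_exists_eq (S := (range N).image fun j : ℕ => m + n * j)
    (T := c + Nat.sqrt (2 * (m.natAbs + K + n * N))) (fun i t => k i + l i * a t) <| by
    simp only [mem_image, mem_range]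
    rintro _ ⟨j, hj, rfl⟩
    obtain ⟨i, _, ⟨t, rfl⟩, hx⟩ := hcover (m + n * j) Int.modEq_add_fac_self
    have hK : (k i).natAbs ≤ K := le_sup (f := fun i => (k i).natAbs) (mem_univ i)
    have hnj : n * j ≤ n * N := Nat.mul_le_mul_left n hj.le
    exact ⟨i, exists_le_sqrt_eq_add_mul hidx hx (by omega)⟩
  rw [card_image_of_injective _ hinj, card_range,
    show 2 * (m.natAbs + K + n * N) = 2 * n * N + 2 * (m.natAbs + K) by ring] at hcard
  linarith
end

section
/- Let q ≥ 2 be a natural number and let Π_q := {q^m : m ∈ ℕ, m ≥ 1}. Then for every natural number n ≥ 1, every integer m, and every finite family of pairs of integers (k₁,l₁),…,(k_p,l_p), the coset m + nℤ is not contained in the union ⋃_{i=1}^{p} {k_i + l_i·α : α ∈ Π_q}; that is, there exists an integer x with x ≡ m (mod n) and x ∉ ⋃_{i=1}^{p} {k_i + l_i·α : α ∈ Π_q}. -/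
/-!
Take `Q = q ^ R` with `R = p n`, so that `p n < Q`. The numbers `m, m + n, …, m + p n` are
pairwise incongruent modulo `Q` (their differences are nonzero and smaller than `Q`), so one
of them, `m + n j`, is congruent to no `kᵢ` modulo `Q`. For `e ≥ R` we have
`kᵢ + lᵢ q ^ e ≡ kᵢ [ZMOD Q]`, so every element of `m + n j + n Q ℤ` avoids those values, and
the finitely many values with `e < R` are avoided by an element of this infinite progression.
-/

open Finset

theorem Int.eq_of_add_mul_modEq_add_mul {m : ℤ} {n Q N j₁ j₂ : ℕ} (hn : 0 < n) (hQ : N * n < Q)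
    (hj₁ : j₁ ≤ N) (hj₂ : j₂ ≤ N) (h : m + n * j₁ ≡ m + n * j₂ [ZMOD Q]) : j₁ = j₂ := by
  have hnj : n * j₁ ≡ n * j₂ [MOD Q] := by
    rw [← Int.natCast_modEq_iff]
    exact_mod_cast Int.ModEq.add_left_cancel' m h
  refine Nat.eq_of_mul_eq_mul_left hn (hnj.eq_of_lt_of_lt ?_ ?_) <;> nlinarith

theorem Int.exists_add_mul_not_modEq {ι : Type*} [Fintype ι] (k : ι → ℤ) (m : ℤ) {n Q : ℕ}
    (hn : 0 < n) (hQ : Fintype.card ι * n < Q) :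
    ∃ j ≤ Fintype.card ι, ∀ i, ¬m + n * j ≡ k i [ZMOD Q] := by
  set N := Fintype.card ι
  let residue : ℕ → ℤ := fun j => (m + n * j) % Q
  have hinj : Set.InjOn residue (Finset.range (N + 1)) := fun j₁ hj₁ j₂ hj₂ h =>
    eq_of_add_mul_modEq_add_mul hn hQ (mem_range_succ_iff.1 hj₁) (mem_range_succ_iff.1 hj₂) h
  have hcard : #(univ.image fun i => k i % Q) < #((Finset.range (N + 1)).image residue) := by
    rw [card_image_of_injOn hinj, card_range]
    exact Nat.lt_succ_of_le (card_image_le.trans_eq card_univ)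
  obtain ⟨_, hmem, hnot⟩ := exists_mem_notMem_of_card_lt_card hcard
  obtain ⟨j, hj, rfl⟩ := mem_image.1 hmem
  exact ⟨j, mem_range_succ_iff.1 hj, fun i hi => hnot (mem_image.2 ⟨i, mem_univ i, hi.symm⟩)⟩

theorem Int.add_mul_pow_modEq (k l q : ℤ) {R e : ℕ} (he : R ≤ e) :
    k + l * q ^ e ≡ k [ZMOD q ^ R] := by
  simpa using ((Int.modEq_zero_iff_dvd.2 ((pow_dvd_pow q he).mul_left l)).add_left k)

/-- Let `q ≥ 2` and `Π_q = {q^m : m ≥ 1}`. For every `n ≥ 1`, every integer `m`, and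
every finite family of pairs of integers `(kᵢ, lᵢ)`, the coset `m + nℤ` is not contained
in `⋃ᵢ {kᵢ + lᵢ·α : α ∈ Π_q}`: there is an integer `x` with `x ≡ m (mod n)` avoiding
all the sets `{kᵢ + lᵢ·α : α ∈ Π_q}`. -/
theorem coset_not_covered_by_powers (q : ℕ) (hq : 2 ≤ q) :
    ∀ (n : ℕ), 1 ≤ n → ∀ (m : ℤ) (p : ℕ) (k l : Fin p → ℤ),
      ∃ x : ℤ, x ≡ m [ZMOD (n : ℤ)] ∧
        ∀ i : Fin p, ∀ α ∈ {a : ℕ | ∃ m' : ℕ, 1 ≤ m' ∧ a = q ^ m'},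
          x ≠ k i + l i * (α : ℤ) := by
  intro n hn m p k l
  set Q := q ^ (p * n)
  have hQ : Fintype.card (Fin p) * n < Q := by simpa using Nat.lt_pow_self hq
  obtain ⟨j, -, hj⟩ := Int.exists_add_mul_not_modEq k m hn hQ
  let small : Finset ℤ := (univ ×ˢ range (p * n)).image fun ie => k ie.1 + l ie.1 * q ^ ie.2
  have hprog : Function.Injective fun z : ℤ => m + n * j + n * Q * z :=
    (add_right_injective _).comp (mul_right_injective₀ (by positivity))
  obtain ⟨x, ⟨z, hxz⟩, hx⟩ := (Set.infinite_range_of_injective hprog).exists_notMem_finset small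
  have hxQ : x ≡ m + n * j [ZMOD Q] := Int.modEq_iff_dvd.2 ⟨-(n * z), by rw [← hxz]; ring⟩
  refine ⟨x, Int.modEq_iff_dvd.2 ⟨-(j + Q * z), by rw [← hxz]; ring⟩, ?_⟩
  rintro i _ ⟨e, -, rfl⟩ rfl
  by_cases he : e < p * n
  · exact hx (mem_image.2 ⟨(i, e), by simpa using he, by simp⟩)
  · have hpow := Int.add_mul_pow_modEq (k i) (l i) q (not_lt.1 he)
    exact hj i (hxQ.symm.trans (by simpa [Q] using hpow))
end

section
/- Let Fac := {a! : a ∈ ℕ} be the set of factorials. Then for every natural number n ≥ 1, every integer m, and every finite family of pairs of integers (k₁,l₁),…,(k_p,l_p), the coset m + nℤ is not contained in the union ⋃_{i=1}^{p} {k_i + l_i·c : c ∈ Fac}; that is, there exists an integer x with x ≡ m (mod n) and x ∉ ⋃_{i=1}^{p} {k_i + l_i·c : c ∈ Fac}. -/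
/-!
Bound all `|kᵢ|` by `K` and all `|lᵢ|` by `L`, and put `a = L + 2K + n`. A value `k + l·b!` with
`|k| ≤ K`, `|l| ≤ L` is at most `L·a! + K` when `b ≤ a`; when `b > a` the term `l·b!` is a
multiple of `(a+1)!`, so the value is at most `K` or at least `(a+1)! - K`. Hence no such value
lies strictly between `L·a! + K` and `(a+1)! - K`, and this gap is long enough to contain a full
residue system modulo `n`.
-/

open Nat

lemma Int.exists_modEq_mem_Ioc (m t : ℤ) {n : ℤ} (hn : 0 < n) :
    ∃ x, x ≡ m [ZMOD n] ∧ t < x ∧ x ≤ t + n := by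
  refine ⟨t + 1 + (m - (t + 1)) % n, ?_, ?_, ?_⟩
  · calc t + 1 + (m - (t + 1)) % n ≡ t + 1 + (m - (t + 1)) [ZMOD n] :=
          Int.ModEq.add_left _ (Int.mod_modEq _ _)
      _ = m := by ring
  · linarith [Int.emod_nonneg (m - (t + 1)) hn.ne']
  · linarith [Int.emod_lt_of_pos (m - (t + 1)) hn]

lemma mul_factorial_add_lt_factorial_succ (L c : ℕ) : L * (L + c)! + c < (L + c + 1)! := by
  have h : c + 1 ≤ (c + 1) * (L + c)! := Nat.le_mul_of_pos_right _ (factorial_pos _)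
  rw [factorial_succ]
  nlinarith

lemma add_mul_factorial_le_or_factorial_succ_le {k l : ℤ} {K L : ℕ} (hk : k.natAbs ≤ K)
    (hl : l.natAbs ≤ L) (a b : ℕ) :
    k + l * b ! ≤ L * a ! + K ∨ (a + 1)! - K ≤ k + l * b ! := by
  have hk' : |k| ≤ K := by rw [Int.abs_eq_natAbs]; exact_mod_cast hk
  have hl' : |l| ≤ L := by rw [Int.abs_eq_natAbs]; exact_mod_cast hl
  rcases le_or_gt b a with hba | hab
  · left
    have hfac : (b ! : ℤ) ≤ a ! := by exact_mod_cast factorial_le hba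
    calc k + l * b ! ≤ |k| + |l| * b ! := by
          gcongr
          · exact le_abs_self k
          · exact le_abs_self l
      _ ≤ L * a ! + K := by nlinarith [abs_nonneg l]
  · obtain ⟨q, hq⟩ : ((a + 1)! : ℤ) ∣ l * b ! :=
      Dvd.dvd.mul_left (Int.natCast_dvd_natCast.mpr (factorial_dvd_factorial hab)) l
    have hK : -(K : ℤ) ≤ k ∧ k ≤ K := abs_le.mp hk'
    rcases le_or_gt q 0 with hq0 | hq1
    · left
      have : l * b ! ≤ 0 := hq ▸ mul_nonpos_of_nonneg_of_nonpos (by positivity) hq0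
      have : (0 : ℤ) ≤ L * a ! := by positivity
      linarith
    · right
      have : ((a + 1)! : ℤ) ≤ l * b ! := hq ▸ le_mul_of_one_le_right (by positivity) hq1
      linarith

/-- Let `Fac = {a! : a ∈ ℕ}` be the set of factorials. For every `n ≥ 1`, every integer
`m`, and every finite family of pairs of integers `(kᵢ, lᵢ)`, the coset `m + nℤ` is not
contained in `⋃ᵢ {kᵢ + lᵢ·c : c ∈ Fac}`: there is an integer `x` with `x ≡ m (mod n)`
avoiding all the sets `{kᵢ + lᵢ·c : c ∈ Fac}`. -/
theorem coset_not_covered_by_factorials :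
    ∀ (n : ℕ), 1 ≤ n → ∀ (m : ℤ) (p : ℕ) (k l : Fin p → ℤ),
      ∃ x : ℤ, x ≡ m [ZMOD (n : ℤ)] ∧
        ∀ i : Fin p, ∀ c ∈ {c : ℕ | ∃ a : ℕ, c = Nat.factorial a},
          x ≠ k i + l i * (c : ℤ) := by
  intro n hn m p k l
  obtain ⟨K, hK⟩ := Finite.exists_le fun i => (k i).natAbs
  obtain ⟨L, hL⟩ := Finite.exists_le fun i => (l i).natAbs
  set a := L + (2 * K + n)
  obtain ⟨x, hxm, hx_gt, hx_le⟩ :=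
    Int.exists_modEq_mem_Ioc m (L * a ! + K) (by exact_mod_cast hn : (0 : ℤ) < n)
  have hgap : (L * a ! + 2 * K + n : ℤ) < (a + 1)! := by
    have := mul_factorial_add_lt_factorial_succ L (2 * K + n)
    rw [← add_assoc] at this
    exact_mod_cast this
  refine ⟨x, hxm, ?_⟩
  rintro i _ ⟨b, rfl⟩ rfl
  rcases add_mul_factorial_le_or_factorial_succ_le (hK i) (hL i) a b with h | h <;> linarith
end

section
/- Let r ≥ 1, let c₁,…,c_r be integers with c₁ ≠ 0, and let s₁ > s₂ > … > s_r be natural numbers with s₁ > ∑_{j=2}^{r} |c_j|. Then c₁·s₁! + c₂·s₂! + … + c_r·s_r! ≠ 0. -/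
/-!
Split off the leading term: `c₁ s₁! + x = 0` forces `s₁! ∣ x`. Every other `s_j` is at most
`s₁ - 1`, so `|x| ≤ (∑_{j ≥ 2} |c_j|) (s₁ - 1)! < s₁ (s₁ - 1)! = s₁!`, whence `x = 0` and then
`c₁ = 0`.
-/

open Finset
open scoped Nat

theorem Int.mul_add_ne_zero_of_abs_lt {a b n : ℤ} (ha : a ≠ 0) (hb : |b| < n) :
    a * n + b ≠ 0 := by
  intro h
  have hb0 : b = 0 := Int.eq_zero_of_abs_lt_dvd ⟨-a, by linarith⟩ hb
  have hn : n ≠ 0 := (lt_of_le_of_lt (abs_nonneg b) hb).ne'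
  exact mul_ne_zero ha hn (by simpa [hb0] using h)

section FactorialSums

variable {ι : Type*} (t : Finset ι) (c : ι → ℤ) (s : ι → ℕ)

theorem abs_sum_mul_factorial_le {m : ℕ} (hs : ∀ i ∈ t, s i ≤ m) :
    |∑ i ∈ t, c i * ((s i)! : ℤ)| ≤ (∑ i ∈ t, |c i|) * (m ! : ℤ) :=
  calc |∑ i ∈ t, c i * ((s i)! : ℤ)|
      ≤ ∑ i ∈ t, |c i| * ((s i)! : ℤ) := by
        simpa only [abs_mul, Nat.abs_cast] using abs_sum_le_sum_abs (fun i => c i * ((s i)! : ℤ)) t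
    _ ≤ ∑ i ∈ t, |c i| * (m ! : ℤ) := by
        gcongr with i hi
        exact hs i hi
    _ = (∑ i ∈ t, |c i|) * (m ! : ℤ) := (sum_mul _ _ _).symm

theorem abs_sum_mul_factorial_lt {n : ℕ} (hs : ∀ i ∈ t, s i < n)
    (hc : ∑ i ∈ t, |c i| < (n : ℤ)) :
    |∑ i ∈ t, c i * ((s i)! : ℤ)| < (n ! : ℤ) := by
  have hn : n ≠ 0 := by
    have := (sum_nonneg fun i _ => abs_nonneg (c i)).trans_lt hc
    omega
  calc |∑ i ∈ t, c i * ((s i)! : ℤ)|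
      ≤ (∑ i ∈ t, |c i|) * ((n - 1)! : ℤ) :=
        abs_sum_mul_factorial_le t c s fun i hi => Nat.le_sub_one_of_lt (hs i hi)
    _ < (n : ℤ) * ((n - 1)! : ℤ) := by gcongr
    _ = (n ! : ℤ) := by exact_mod_cast Nat.mul_factorial_pred hn

end FactorialSums

/-- Let `c₁, …, c_r` be integers with `c₁ ≠ 0`, and let `s₁ > s₂ > … > s_r` be natural
numbers with `s₁ > ∑_{j=2}^{r} |c_j|`. Then `c₁·s₁! + … + c_r·s_r! ≠ 0`. -/
theorem factorial_combination_ne_zero (r : ℕ) (hr : 1 ≤ r)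
    (c : Fin r → ℤ) (hc : c ⟨0, hr⟩ ≠ 0)
    (s : Fin r → ℕ) (hs : ∀ i j : Fin r, i < j → s j < s i)
    (hbig : ∑ j ∈ univ.erase ⟨0, hr⟩, |c j| < (s ⟨0, hr⟩ : ℤ)) :
    ∑ i, c i * (Nat.factorial (s i) : ℤ) ≠ 0 := by
  have htail : ∀ i ∈ univ.erase (⟨0, hr⟩ : Fin r), s i < s ⟨0, hr⟩ := fun i hi =>
    hs _ i (Nat.pos_of_ne_zero fun h => ne_of_mem_erase hi (Fin.ext h))
  rw [← add_sum_erase _ _ (mem_univ ⟨0, hr⟩)]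
  exact Int.mul_add_ne_zero_of_abs_lt hc (abs_sum_mul_factorial_lt _ c s htail hbig)
end
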